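/- Given αK < D and positive constants α, K, D, H, there exists a unique g_c > 0 such that αK + H·g_c·a_{g_c} = D, where a_g is the unique positive solution of (αK/D) + (gH/α) + (gH/D)a = (gH/α)e^{αa/D}. -/

import Mathlib

/-!
Substituting `x = α a / D`, the equation defining `a_g` becomes `exp x - x = 1 + α² K / (D g H)`,
whose left side is strictly increasing on `[0, ∞)`; this gives uniqueness of `a_g`. On the
curve `H g a = D - α K`, the same equation is equivalent to `exp x = 1 + c x` with
`c = D / (D - α K) > 1`. By strict convexity of `exp` the secant slope `(exp x - 1) / x` is
strictly increasing, so this has exactly one positive root `x`, and then `a = D x / α` and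
`g = (D - α K) / (H a)` are forced.
-/

open Real Set

lemma strictMonoOn_exp_sub_self : StrictMonoOn (fun x => exp x - x) (Ici 0) := by
  intro x hx y _ hxy
  have hgap : y - x < exp (y - x) - 1 := by linarith [add_one_lt_exp (sub_ne_zero.2 hxy.ne')]
  have hexp : 1 ≤ exp x := one_le_exp hx
  have : exp y - exp x = exp x * (exp (y - x) - 1) := by rw [exp_sub]; field_simp
  dsimp only
  nlinarith

lemma strictMonoOn_exp_sub_one_div : StrictMonoOn (fun x => (exp x - 1) / x) (Ioi 0) := by
  intro x hx y hy hxy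
  simpa [exp_zero] using
    strictConvexOn_exp.secant_strict_mono (a := 0) (mem_univ _) (mem_univ _) (mem_univ _)
      (ne_of_gt hx) (ne_of_gt hy) hxy

lemma exists_pos_exp_eq_one_add_mul {c : ℝ} (hc : 1 < c) :
    ∃ x, 0 < x ∧ exp x = 1 + c * x := by
  have hc0 : 0 < c := by linarith
  have hlog : 0 < log c := log_pos hc
  have hlog_gt : 1 - c⁻¹ < log c := by
    have := log_lt_sub_one_of_pos (inv_pos.2 hc0) (inv_ne_one.2 hc.ne')
    rw [log_inv] at this
    linarith
  have hneg : exp (log c) - 1 - c * log c < 0 := by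
    rw [exp_log hc0]
    nlinarith [mul_inv_cancel₀ hc0.ne']
  have hpos : 0 < exp (2 * c) - 1 - c * (2 * c) := by
    nlinarith [quadratic_le_exp_of_nonneg (by linarith : (0 : ℝ) ≤ 2 * c)]
  have hle : log c ≤ 2 * c := by linarith [log_le_sub_one_of_pos hc0]
  obtain ⟨x, hx, hroot⟩ := intermediate_value_Icc hle (by fun_prop : Continuous
      fun x => exp x - 1 - c * x).continuousOn ⟨hneg.le, hpos.le⟩
  exact ⟨x, hlog.trans_le hx.1, by linarith [hroot]⟩

lemma existsUnique_pos_exp_eq_one_add_mul {c : ℝ} (hc : 1 < c) :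
    ∃! x, 0 < x ∧ exp x = 1 + c * x := by
  obtain ⟨x, hx, hxc⟩ := exists_pos_exp_eq_one_add_mul hc
  have slope_eq {y : ℝ} (hy : 0 < y) (hyc : exp y = 1 + c * y) : (exp y - 1) / y = c := by
    rw [hyc]; field_simp; ring
  refine ⟨x, ⟨hx, hxc⟩, fun y ⟨hy, hyc⟩ => strictMonoOn_exp_sub_one_div.injOn hy hx ?_⟩
  simp only [slope_eq hy hyc, slope_eq hx hxc]

section ImplicitEquation

variable {α K D H g a : ℝ}

lemma implicit_eq_iff_exp_sub_self (hα : α ≠ 0) (hD : D ≠ 0) (hH : H ≠ 0) (hg : g ≠ 0) :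
    α * K / D + g * H / α + g * H / D * a = g * H / α * exp (α * a / D) ↔
      exp (α * a / D) - α * a / D = 1 + α ^ 2 * K / (D * g * H) := by
  generalize exp (α * a / D) = E
  constructor <;> intro h <;> field_simp at h ⊢ <;> linarith

lemma implicit_eq_unique (hα : 0 < α) (hD : 0 < D) (hH : 0 < H) (hg : 0 < g) {a₁ a₂ : ℝ}
    (ha₁ : 0 ≤ a₁) (ha₂ : 0 ≤ a₂)
    (h₁ : α * K / D + g * H / α + g * H / D * a₁ = g * H / α * exp (α * a₁ / D))
    (h₂ : α * K / D + g * H / α + g * H / D * a₂ = g * H / α * exp (α * a₂ / D)) :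
    a₁ = a₂ := by
  rw [implicit_eq_iff_exp_sub_self hα.ne' hD.ne' hH.ne' hg.ne'] at h₁ h₂
  have hx := strictMonoOn_exp_sub_self.injOn (by positivity : (0 : ℝ) ≤ α * a₁ / D)
    (by positivity : (0 : ℝ) ≤ α * a₂ / D) (h₁.trans h₂.symm)
  field_simp at hx
  exact hx

/-- On the curve `H g a = D - α K`, both equations say `exp (α a / D) = 1 + α / (g H)`. -/
lemma implicit_eq_iff_exp_eq_one_add_mul (hα : α ≠ 0) (hD : D ≠ 0) (hH : H ≠ 0) (hg : g ≠ 0)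
    (ha : a ≠ 0) (hbalance : H * g * a = D - α * K) :
    α * K / D + g * H / α + g * H / D * a = g * H / α * exp (α * a / D) ↔
      exp (α * a / D) = 1 + D / (D - α * K) * (α * a / D) := by
  rw [← hbalance]
  have hK : α * K = D - H * g * a := by linarith
  rw [hK]
  generalize exp (α * a / D) = E
  constructor <;> intro h <;> field_simp at h ⊢
  · exact mul_left_cancel₀ hD (by linear_combination -h)
  · linear_combination -D * h

end ImplicitEquation

theorem stmt_12 (α K D H : ℝ) (hα : 0 < α) (hK : 0 < K) (hD : 0 < D) (hH : 0 < H)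
    (hKD : α * K < D)
    (a : ℝ → ℝ)
    (ha : ∀ g : ℝ, 0 < g → 0 < a g ∧
      α * K / D + g * H / α + g * H / D * a g = g * H / α * Real.exp (α * a g / D)) :
    ∃! g : ℝ, 0 < g ∧ α * K + H * g * a g = D := by
  have hDK : 0 < D - α * K := by linarith
  have hc : 1 < D / (D - α * K) := (one_lt_div hDK).2 (by nlinarith)
  obtain ⟨x, ⟨hx, hxc⟩, hx_unique⟩ := existsUnique_pos_exp_eq_one_add_mul hc
  set a₀ := D * x / α with ha₀
  have ha₀_pos : 0 < a₀ := by positivity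
  have hαa₀ : α * a₀ / D = x := by rw [ha₀]; field_simp
  set g₀ := (D - α * K) / (H * a₀)
  have hg₀ : 0 < g₀ := by positivity
  have hbalance₀ : H * g₀ * a₀ = D - α * K := by simp only [g₀]; field_simp
  have hag₀ : a g₀ = a₀ := by
    refine implicit_eq_unique hα hD hH hg₀ (ha g₀ hg₀).1.le ha₀_pos.le (ha g₀ hg₀).2 ?_
    rw [implicit_eq_iff_exp_eq_one_add_mul hα.ne' hD.ne' hH.ne' hg₀.ne' ha₀_pos.ne' hbalance₀,
      hαa₀, hxc]
  refine ⟨g₀, ⟨hg₀, by rw [hag₀]; linarith⟩, fun g ⟨hg, hgD⟩ => ?_⟩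
  obtain ⟨hag, hga⟩ := ha g hg
  have hbalance : H * g * a g = D - α * K := by linarith
  rw [implicit_eq_iff_exp_eq_one_add_mul hα.ne' hD.ne' hH.ne' hg.ne' hag.ne' hbalance] at hga
  have hag_eq : a g = a₀ := by
    have := hx_unique _ ⟨by positivity, hga⟩
    rw [← hαa₀] at this
    field_simp at this
    exact this
  rw [hag_eq, ← hbalance₀] at hbalance
  field_simp at hbalance
  exact hbalance
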